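/- Let A = {a,b,c,d} and let R19 be the 4-agent profile with ≿_1: {a,b} ≻ {c,d}; ≿_2: {c,d} ≻ {a,b}; ≿_3: {b,d} ≻ a ≻ c; ≿_4: {a,c} ≻ {b,d}. Then the lottery (1/2)a + (1/2)d stochastically dominates the lottery (1/2)b + (1/2)c for every agent, and strictly for some agent; consequently every SD-efficient lottery p at R19 satisfies p(b) = 0 or p(c) = 0. -/

import Mathlib

open Classical

noncomputable section

variable {A : Type*} [Fintype A]

/-- A (weak) preference relation: complete and transitive. -/
def IsPref (r : A → A → Prop) : Prop :=
  (∀ x y, r x y ∨ r y x) ∧ ∀ x y z, r x y → r y z → r x z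

/-- A lottery over the alternatives. -/
def Lottery (A : Type*) [Fintype A] :=
  {p : A → ℝ // (∀ x, 0 ≤ p x) ∧ ∑ x, p x = 1}

/-- Probability that lottery `p` yields an alternative at least as good as `x` w.r.t. `r`. -/
def upperSum (r : A → A → Prop) (p : Lottery A) (x : A) : ℝ :=
  ∑ y, if r y x then p.1 y else 0

/-- `p` (weakly) stochastically dominates `q` w.r.t. the preference relation `r`. -/
def SDGe (r : A → A → Prop) (p q : Lottery A) : Prop :=
  ∀ x, upperSum r q x ≤ upperSum r p x

/-- Strict stochastic dominance. -/
def SDGt (r : A → A → Prop) (p q : Lottery A) : Prop :=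
  SDGe r p q ∧ ¬ SDGe r q p

/-- A profile assigning a preference relation to each of `n` agents; validity. -/
def ValidProfile {n : ℕ} (R : Fin n → A → A → Prop) : Prop :=
  ∀ i, IsPref (R i)

/-- `p` is SD-efficient at profile `R`. -/
def SDEfficientAt {n : ℕ} (R : Fin n → A → A → Prop) (p : Lottery A) : Prop :=
  ¬ ∃ q : Lottery A, (∀ i, SDGe (R i) q p) ∧ ∃ i, SDGt (R i) q p

def Anonymous {n : ℕ} (f : (Fin n → A → A → Prop) → Lottery A) : Prop :=
  ∀ R : Fin n → A → A → Prop, ValidProfile R →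
    ∀ σ : Equiv.Perm (Fin n), f (R ∘ σ) = f R

/-- Relabel a preference relation by a permutation of the alternatives. -/
def relabel (π : Equiv.Perm A) (r : A → A → Prop) : A → A → Prop :=
  fun x y => r (π.symm x) (π.symm y)

def relabelProfile {n : ℕ} (π : Equiv.Perm A) (R : Fin n → A → A → Prop) :
    Fin n → A → A → Prop :=
  fun i => relabel π (R i)

def Neutral {n : ℕ} (f : (Fin n → A → A → Prop) → Lottery A) : Prop :=
  ∀ R : Fin n → A → A → Prop, ValidProfile R →
    ∀ (π : Equiv.Perm A) (x : A), (f (relabelProfile π R)).1 (π x) = (f R).1 x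

def Efficient {n : ℕ} (f : (Fin n → A → A → Prop) → Lottery A) : Prop :=
  ∀ R : Fin n → A → A → Prop, ValidProfile R → SDEfficientAt R (f R)

def Strategyproof {n : ℕ} (f : (Fin n → A → A → Prop) → Lottery A) : Prop :=
  ¬ ∃ (R : Fin n → A → A → Prop) (i : Fin n) (r : A → A → Prop),
      ValidProfile R ∧ IsPref r ∧ SDGt (R i) (f (Function.update R i r)) (f R)


/-- The preference relation induced by a rank function (lower rank = better). -/
def prefOfRank (ρ : Fin 4 → ℕ) : Fin 4 → Fin 4 → Prop := fun x y => ρ x ≤ ρ y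

/-- Profile `R19`: with `a = 0`, `b = 1`, `c = 2`, `d = 3`;
`≿₁: {a,b},{c,d}`, `≿₂: {c,d},{a,b}`, `≿₃: {b,d},a,c`, `≿₄: {a,c},{b,d}`. -/
def R19 : Fin 4 → Fin 4 → Fin 4 → Prop :=
  ![prefOfRank ![0, 0, 1, 1], prefOfRank ![1, 1, 0, 0],
    prefOfRank ![1, 0, 2, 0], prefOfRank ![0, 1, 0, 1]]

/-- The lottery `1/2 a + 1/2 d`. -/
def pAD : Lottery (Fin 4) :=
  ⟨![1/2, 0, 0, 1/2], by
    refine ⟨fun x => ?_, ?_⟩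
    · fin_cases x <;> norm_num
    · norm_num [Fin.sum_univ_succ]⟩

/-- The lottery `1/2 b + 1/2 c`. -/
def pBC : Lottery (Fin 4) :=
  ⟨![0, 1/2, 1/2, 0], by
    refine ⟨fun x => ?_, ?_⟩
    · fin_cases x <;> norm_num
    · norm_num [Fin.sum_univ_succ]⟩

/-!
Upper sums are affine in the lottery. Hence if `q'` SD-dominates `q` and `ε • q ≤ p` with
`ε > 0`, moving the mass `ε • q` of `p` onto `ε • q'` yields a lottery that SD-dominates `p`
in exactly the same way, so an SD-efficient lottery never contains the support of an
SD-dominated one. At `R19` the lottery `½ a + ½ d` dominates `½ b + ½ c`, whose support is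
`{b, c}`.
-/

namespace Lottery

theorem exists_pos_smul_le (p q : Lottery A) (hsupp : ∀ x, q.1 x ≠ 0 → p.1 x ≠ 0) :
    ∃ ε > 0, ∀ x, ε * q.1 x ≤ p.1 x := by
  obtain ⟨x₁, -, -⟩ := Finset.exists_ne_zero_of_sum_ne_zero (q.2.2 ▸ one_ne_zero)
  have : Nonempty A := ⟨x₁⟩
  let ratio x := if q.1 x = 0 then 1 else p.1 x / q.1 x
  have ratio_pos x : 0 < ratio x := by
    by_cases hx : q.1 x = 0
    · simp [ratio, hx]
    · simp only [ratio, hx, if_false]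
      exact div_pos ((p.2.1 x).lt_of_ne' (hsupp x hx)) ((q.2.1 x).lt_of_ne' hx)
  obtain ⟨x₀, hmin⟩ := Finite.exists_min ratio
  refine ⟨ratio x₀, ratio_pos x₀, fun x => ?_⟩
  by_cases hx : q.1 x = 0
  · simpa [hx] using p.2.1 x
  · have hq : 0 < q.1 x := (q.2.1 x).lt_of_ne' hx
    have := hmin x
    simp only [ratio, hx, if_false] at this
    exact (le_div_iff₀ hq).mp this

def transfer (p q q' : Lottery A) (ε : ℝ) (hε : 0 ≤ ε) (hle : ∀ x, ε * q.1 x ≤ p.1 x) :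
    Lottery A :=
  ⟨fun x => p.1 x + ε * (q'.1 x - q.1 x), fun x => by nlinarith [hle x, q'.2.1 x], by
    simp only [Finset.sum_add_distrib, ← Finset.mul_sum, Finset.sum_sub_distrib, p.2.2, q.2.2,
      q'.2.2]
    ring⟩

variable {p q q' : Lottery A} {ε : ℝ} {hε : 0 ≤ ε} {hle : ∀ x, ε * q.1 x ≤ p.1 x}

theorem upperSum_transfer (r : A → A → Prop) (x : A) :
    upperSum r (p.transfer q q' ε hε hle) x =
      upperSum r p x + ε * (upperSum r q' x - upperSum r q x) := by
  simp only [upperSum, transfer, Finset.mul_sum, ← Finset.sum_sub_distrib,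
    ← Finset.sum_add_distrib]
  refine Finset.sum_congr rfl fun y _ => ?_
  split_ifs <;> ring

theorem sdGe_transfer_self_iff (hpos : 0 < ε) (r : A → A → Prop) :
    SDGe r (p.transfer q q' ε hε hle) p ↔ SDGe r q' q := by
  simp only [SDGe, upperSum_transfer]
  refine forall_congr' fun x => ?_
  constructor <;> intro h <;> nlinarith

theorem sdGe_self_transfer_iff (hpos : 0 < ε) (r : A → A → Prop) :
    SDGe r p (p.transfer q q' ε hε hle) ↔ SDGe r q q' := by
  simp only [SDGe, upperSum_transfer]
  refine forall_congr' fun x => ?_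
  constructor <;> intro h <;> nlinarith

theorem sdGt_transfer_self_iff (hpos : 0 < ε) (r : A → A → Prop) :
    SDGt r (p.transfer q q' ε hε hle) p ↔ SDGt r q' q := by
  rw [SDGt, SDGt, sdGe_transfer_self_iff hpos, sdGe_self_transfer_iff hpos]

end Lottery

theorem SDEfficientAt.exists_support_not_subset {n : ℕ} {R : Fin n → A → A → Prop}
    {p q q' : Lottery A} (hp : SDEfficientAt R p) (hge : ∀ i, SDGe (R i) q' q)
    (hgt : ∃ i, SDGt (R i) q' q) : ∃ x, q.1 x ≠ 0 ∧ p.1 x = 0 := by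
  by_contra! hsupp
  obtain ⟨ε, hpos, hle⟩ := p.exists_pos_smul_le q hsupp
  obtain ⟨i, hi⟩ := hgt
  exact hp ⟨p.transfer q q' ε hpos.le hle,
    fun j => (Lottery.sdGe_transfer_self_iff hpos _).mpr (hge j),
    i, (Lottery.sdGt_transfer_self_iff hpos _).mpr hi⟩

theorem R19_sdGe_pAD_pBC (i : Fin 4) : SDGe (R19 i) pAD pBC := by
  intro x
  fin_cases i <;> fin_cases x <;> simp [upperSum, Fin.sum_univ_four, R19, prefOfRank, pAD, pBC]

theorem R19_sdGt_pAD_pBC : SDGt (R19 2) pAD pBC := by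
  refine ⟨R19_sdGe_pAD_pBC 2, fun h => ?_⟩
  have := h 0
  simp [upperSum, Fin.sum_univ_four, R19, prefOfRank, pAD, pBC] at this
  norm_num at this

/-- At `R19`, `1/2 a + 1/2 d` stochastically dominates `1/2 b + 1/2 c` for every agent,
strictly for some agent; hence every SD-efficient lottery at `R19` puts probability zero on
`b` or on `c`. -/
theorem R19_bc_inefficient_support :
    (∀ i : Fin 4, SDGe (R19 i) pAD pBC) ∧
    (∃ i : Fin 4, SDGt (R19 i) pAD pBC) ∧
    (∀ p : Lottery (Fin 4), SDEfficientAt R19 p → p.1 1 = 0 ∨ p.1 2 = 0) := by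
  refine ⟨R19_sdGe_pAD_pBC, ⟨2, R19_sdGt_pAD_pBC⟩, fun p hp => ?_⟩
  obtain ⟨x, hqx, hpx⟩ :=
    hp.exists_support_not_subset R19_sdGe_pAD_pBC ⟨2, R19_sdGt_pAD_pBC⟩
  fin_cases x <;> simp_all [pBC]

end
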